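/- arXiv:1805.11955 — 2 statements merged into one kernel-verified Lean document; each statement's English description precedes it below -/
import Mathlib

section
/- Let S be an inverse semigroup and let R be a system over S that is coherent and left (or right) s-unital epsilon-strong. Then R is left (respectively right) non-degenerate, and the ring extension R / C_R(Z(R_0)) has the ideal intersection property, i.e. every nonzero ideal of R has nonzero intersection with C_R(Z(R_0)). -/
open Pointwise

namespace PaperSys

variable {S R : Type*} [Semigroup S] [NonUnitalRing R]

/-- The additive subgroup of finite sums of products `a * b` with `a ∈ A`, `b ∈ B`. -/
def sumProd (A B : AddSubgroup R) : AddSubgroup R :=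
  AddSubgroup.closure ((A : Set R) * (B : Set R))

/-- `𝓡` is a system over the semigroup `S` on the ring `R`:
`R = Σ_{s ∈ S} R_s` and `R_s R_t ⊆ R_{st}`. -/
def IsSystem (𝓡 : S → AddSubgroup R) : Prop :=
  (⨆ s : S, 𝓡 s) = (⊤ : AddSubgroup R) ∧
    ∀ s t : S, ∀ x ∈ 𝓡 s, ∀ y ∈ 𝓡 t, x * y ∈ 𝓡 (s * t)

/-- `R₀ = Σ_{e ∈ E(S)} R_e`. -/
def sysZero (𝓡 : S → AddSubgroup R) : AddSubgroup R :=
  ⨆ e ∈ {e : S | e * e = e}, 𝓡 e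

/-- `I` is a two-sided ideal of the (possibly non-unital) ring `R`. -/
def IsRingIdeal (I : AddSubgroup R) : Prop :=
  ∀ r : R, ∀ x ∈ I, r * x ∈ I ∧ x * r ∈ I

/-- `I` is a system ideal: an ideal with `I = Σ_{s ∈ S} (I ∩ R_s)`. -/
def IsSystemIdeal (𝓡 : S → AddSubgroup R) (I : AddSubgroup R) : Prop :=
  IsRingIdeal I ∧ I = ⨆ s : S, (I ⊓ 𝓡 s)

/-- `R` is system simple: `{0}` and `R` are the only system ideals. -/
def SystemSimple (𝓡 : S → AddSubgroup R) : Prop :=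
  ∀ I : AddSubgroup R, IsSystemIdeal 𝓡 I → I = ⊥ ∨ I = ⊤

/-- `R` is a simple ring: `{0}` and `R` are the only two-sided ideals. -/
def RingSimple (R' : Type*) [NonUnitalRing R'] : Prop :=
  ∀ I : AddSubgroup R', IsRingIdeal I → I = ⊥ ∨ I = ⊤

/-- `Z(R₀)` as a subset of `R`. -/
def centerZero (𝓡 : S → AddSubgroup R) : Set R :=
  {z : R | z ∈ sysZero 𝓡 ∧ ∀ y ∈ sysZero 𝓡, z * y = y * z}

/-- `C_R(Z(R₀))` as a subset of `R`. -/
def centCenterZero (𝓡 : S → AddSubgroup R) : Set R :=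
  {x : R | ∀ z ∈ centerZero 𝓡, x * z = z * x}

/-- The system is idempotent coherent: `R₀ R_s ⊆ R_s` and `R_s R₀ ⊆ R_s`. -/
def IdemCoherent (𝓡 : S → AddSubgroup R) : Prop :=
  ∀ s : S, (∀ x ∈ sysZero 𝓡, ∀ y ∈ 𝓡 s, x * y ∈ 𝓡 s) ∧
    (∀ x ∈ sysZero 𝓡, ∀ y ∈ 𝓡 s, y * x ∈ 𝓡 s)

/-- The system is left non-degenerate. -/
def LeftNonDeg (𝓡 : S → AddSubgroup R) : Prop :=
  ∀ e : S, e * e = e → ∀ r ∈ 𝓡 e, r ≠ 0 →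
    ∃ t : S, (t * e) * (t * e) = t * e ∧ ∃ x ∈ 𝓡 t, x * r ≠ 0

/-- The system is right non-degenerate. -/
def RightNonDeg (𝓡 : S → AddSubgroup R) : Prop :=
  ∀ e : S, e * e = e → ∀ r ∈ 𝓡 e, r ≠ 0 →
    ∃ t : S, (e * t) * (e * t) = e * t ∧ ∃ x ∈ 𝓡 t, r * x ≠ 0

/-- `star` makes the semigroup `S` an inverse semigroup: `s (s*) s = s`,
`(s*) s (s*) = s*`, and `s*` is the unique such element. -/
def IsInverseStar (star : S → S) : Prop :=
  (∀ s : S, s * star s * s = s) ∧ (∀ s : S, star s * s * star s = star s) ∧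
    ∀ s t : S, s * t * s = s → t * s * t = t → t = star s

/-- Coherent: `s ≤ t` (i.e. `s = t s* s`) implies `R_s ⊆ R_t`. -/
def Coherent (star : S → S) (𝓡 : S → AddSubgroup R) : Prop :=
  ∀ s t : S, s = t * star s * s → 𝓡 s ≤ 𝓡 t

/-- Left s-unital epsilon-strong. -/
def LeftSEps (star : S → S) (𝓡 : S → AddSubgroup R) : Prop :=
  ∀ s : S, ∀ r ∈ 𝓡 s, ∃ ε ∈ sumProd (𝓡 s) (𝓡 (star s)), ε * r = r

/-- Right s-unital epsilon-strong. -/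
def RightSEps (star : S → S) (𝓡 : S → AddSubgroup R) : Prop :=
  ∀ s : S, ∀ r ∈ 𝓡 s, ∃ ε ∈ sumProd (𝓡 (star s)) (𝓡 s), r * ε = r

/-- Symmetric: `R_s R_{s*} R_s = R_s` for all `s`. -/
def IsSymmetricSys (star : S → S) (𝓡 : S → AddSubgroup R) : Prop :=
  ∀ s : S, sumProd (sumProd (𝓡 s) (𝓡 (star s))) (𝓡 s) = 𝓡 s

/-- The ring extension `R / C_R(Z(R₀))` has the ideal intersection property. -/
def IIPCentCenterZero (𝓡 : S → AddSubgroup R) : Prop :=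
  ∀ I : AddSubgroup R, IsRingIdeal I → I ≠ ⊥ →
    ∃ x : R, x ≠ 0 ∧ x ∈ I ∧ x ∈ centCenterZero 𝓡

/-- `R₀` is a maximal commutative subring of `R`: `C_R(R₀) = R₀`. -/
def MaxCommZero (𝓡 : S → AddSubgroup R) : Prop :=
  {x : R | ∀ y ∈ sysZero 𝓡, x * y = y * x} = (sysZero 𝓡 : Set R)

end PaperSys

/-!
In an inverse semigroup idempotents commute and `(st)* = t* s*`, so `f t ≤ t` and `t e ≤ t` for
idempotents `e, f`; by coherence every `R_t` is then an `R₀`-bimodule.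

Given a nonzero ideal, pick a nonzero `a` in it that is a sum of the fewest homogeneous terms,
its head in `R_s`. Multiplying by a suitable element of `R_{s*}` (epsilon-strongness) keeps
`a` nonzero and the number of terms, and moves the head into `R₀`. For `z ∈ Z(R₀)`
the commutator `a z - z a` is then a sum of fewer terms in the ideal, hence zero.
Non-degeneracy is immediate: the local unit `ε` of `r ∈ R_e` lies in `R_e`.
-/

namespace PaperSys

variable {S R : Type*}

namespace IsInverseStar

variable [Semigroup S] {star : S → S} (hstar : IsInverseStar star)
include hstar

theorem eq_star {s t : S} (h₁ : s * t * s = s) (h₂ : t * s * t = t) : t = star s :=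
  hstar.2.2 s t h₁ h₂

theorem star_star (s : S) : star (star s) = s :=
  (hstar.eq_star (hstar.2.1 s) (hstar.1 s)).symm

theorem star_eq_self {e : S} (he : IsIdempotentElem e) : star e = e :=
  (hstar.eq_star (by rw [he.eq, he.eq]) (by rw [he.eq, he.eq])).symm

theorem isIdempotentElem_mul_star (s : S) : IsIdempotentElem (s * star s) := by
  rw [IsIdempotentElem, ← mul_assoc, hstar.1 s]

theorem isIdempotentElem_star_mul (s : S) : IsIdempotentElem (star s * s) := by
  rw [IsIdempotentElem, ← mul_assoc, hstar.2.1 s]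

/-- `f (ef)* e` is again an inverse of `ef`, so `(ef)* = f (ef)* e`, which is idempotent. -/
theorem isIdempotentElem_mul {e f : S} (he : IsIdempotentElem e) (hf : IsIdempotentElem f) :
    IsIdempotentElem (e * f) := by
  have h₁ := hstar.1 (e * f)
  have h₂ := hstar.2.1 (e * f)
  have hx : f * star (e * f) * e = star (e * f) :=
    hstar.eq_star (by grind [he.eq, hf.eq]) (by grind [he.eq, hf.eq])
  have hx' : IsIdempotentElem (star (e * f)) := by
    rw [IsIdempotentElem]
    grind [he.eq, hf.eq]
  rw [← hstar.star_star (e * f), hstar.star_eq_self hx']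
  exact hx'

theorem commute_of_isIdempotentElem {e f : S} (he : IsIdempotentElem e)
    (hf : IsIdempotentElem f) : Commute e f := by
  have hef := hstar.isIdempotentElem_mul he hf
  have hfe := hstar.isIdempotentElem_mul hf he
  have : f * e = star (e * f) :=
    hstar.eq_star (by grind [he.eq, hf.eq, hef.eq]) (by grind [he.eq, hf.eq, hfe.eq])
  rw [Commute, SemiconjBy, this, hstar.star_eq_self hef]

theorem star_mul (s t : S) : star (s * t) = star t * star s := by
  have hc := hstar.commute_of_isIdempotentElem (hstar.isIdempotentElem_mul_star t)
    (hstar.isIdempotentElem_star_mul s)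
  exact (hstar.eq_star (by grind [hc.eq, hstar.1 s, hstar.1 t])
    (by grind [hc.eq, hstar.2.1 s, hstar.2.1 t])).symm

theorem idem_mul_eq_mul_star_mul {f : S} (hf : IsIdempotentElem f) (t : S) :
    f * t = t * star (f * t) * (f * t) := by
  have hc := hstar.commute_of_isIdempotentElem hf (hstar.isIdempotentElem_mul_star t)
  rw [hstar.star_mul, hstar.star_eq_self hf]
  grind [hf.eq, hc.eq, hstar.1 t]

theorem mul_idem_eq_mul_star_mul {e : S} (he : IsIdempotentElem e) (t : S) :
    t * e = t * star (t * e) * (t * e) := by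
  have hc := hstar.commute_of_isIdempotentElem he (hstar.isIdempotentElem_star_mul t)
  rw [hstar.star_mul, hstar.star_eq_self he]
  grind [he.eq, hc.eq, hstar.1 t]

end IsInverseStar

section Products

variable [NonUnitalRing R]

theorem sumProd_mul_eq_zero {A B : AddSubgroup R} {a ε : R} (hB : ∀ v ∈ B, v * a = 0)
    (hε : ε ∈ sumProd A B) : ε * a = 0 := by
  have : sumProd A B ≤ (AddMonoidHom.mulRight a).ker :=
    (AddSubgroup.closure_le _).mpr <| Set.mul_subset_iff.mpr fun u _ v hv => by
      simp [mul_assoc, hB v hv]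
  exact this hε

theorem mul_sumProd_eq_zero {A B : AddSubgroup R} {a ε : R} (hA : ∀ u ∈ A, a * u = 0)
    (hε : ε ∈ sumProd A B) : a * ε = 0 := by
  have : sumProd A B ≤ (AddMonoidHom.mulLeft a).ker :=
    (AddSubgroup.closure_le _).mpr <| Set.mul_subset_iff.mpr fun u hu v _ => by
      simp [← mul_assoc, hA u hu]
  exact this hε

end Products

section HomogeneousSum

variable [AddCommGroup R] {𝓡 : S → AddSubgroup R}

def IsHomogeneousSum (𝓡 : S → AddSubgroup R) (n : ℕ) (a : R) : Prop :=
  ∃ (s : Fin n → S) (r : Fin n → R), (∀ i, r i ∈ 𝓡 (s i)) ∧ ∑ i, r i = a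

namespace IsHomogeneousSum

variable {n : ℕ} {a : R}

theorem eq_zero (h : IsHomogeneousSum 𝓡 0 a) : a = 0 := by
  obtain ⟨_, r, _, rfl⟩ := h
  exact Fin.sum_univ_zero r

theorem add {m : ℕ} {b : R} (ha : IsHomogeneousSum 𝓡 m a) (hb : IsHomogeneousSum 𝓡 n b) :
    IsHomogeneousSum 𝓡 (m + n) (a + b) := by
  obtain ⟨s, r, hr, rfl⟩ := ha
  obtain ⟨s', r', hr', rfl⟩ := hb
  refine ⟨Fin.append s s', Fin.append r r', Fin.addCases ?_ ?_, by simp [Fin.sum_univ_add]⟩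
  all_goals simpa

theorem map (φ : R →+ R) (σ : S → S) (hφ : ∀ t, ∀ x ∈ 𝓡 t, φ x ∈ 𝓡 (σ t))
    (h : IsHomogeneousSum 𝓡 n a) : IsHomogeneousSum 𝓡 n (φ a) := by
  obtain ⟨s, r, hr, rfl⟩ := h
  exact ⟨σ ∘ s, φ ∘ r, fun i => hφ _ _ (hr i), (map_sum φ r _).symm⟩

theorem exists_head (h : IsHomogeneousSum 𝓡 (n + 1) a) :
    ∃ s, ∃ r ∈ 𝓡 s, IsHomogeneousSum 𝓡 n (a - r) := by
  obtain ⟨s, r, hr, rfl⟩ := h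
  refine ⟨s 0, r 0, hr 0, Fin.tail s, Fin.tail r, fun i => hr i.succ, ?_⟩
  rw [Fin.sum_univ_succ, add_sub_cancel_left]
  rfl

end IsHomogeneousSum

end HomogeneousSum

variable [Semigroup S] [NonUnitalRing R] {𝓡 : S → AddSubgroup R}

theorem IsSystem.sumProd_le (hsys : IsSystem 𝓡) (s t : S) : sumProd (𝓡 s) (𝓡 t) ≤ 𝓡 (s * t) :=
  (AddSubgroup.closure_le _).mpr <| Set.mul_subset_iff.mpr <| hsys.2 s t

theorem le_sysZero {e : S} (he : IsIdempotentElem e) : 𝓡 e ≤ sysZero 𝓡 :=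
  le_iSup₂ (f := fun e (_ : e ∈ {e : S | e * e = e}) => 𝓡 e) e he

theorem Coherent.idemCoherent {star : S → S} (hcoh : Coherent star 𝓡)
    (hstar : IsInverseStar star) (hsys : IsSystem 𝓡) : IdemCoherent 𝓡 := by
  intro t
  suffices ∀ y ∈ 𝓡 t, sysZero 𝓡 ≤
      (𝓡 t).comap (AddMonoidHom.mulRight y) ⊓ (𝓡 t).comap (AddMonoidHom.mulLeft y) from
    ⟨fun x hx y hy => (this y hy hx).1, fun x hx y hy => (this y hy hx).2⟩
  refine fun y hy => iSup₂_le fun e he x hx => ⟨?_, ?_⟩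
  · exact hcoh _ _ (hstar.idem_mul_eq_mul_star_mul he t) (hsys.2 e t x hx y hy)
  · exact hcoh _ _ (hstar.mul_idem_eq_mul_star_mul he t) (hsys.2 t e y hy x hx)

theorem leftNonDeg_of_leftSEps {star : S → S} (hstar : IsInverseStar star)
    (hsys : IsSystem 𝓡) (hle : LeftSEps star 𝓡) : LeftNonDeg 𝓡 := by
  intro e he r hr hr0
  obtain ⟨ε, hε, hεr⟩ := hle e r hr
  have hεe := hsys.sumProd_le e (star e) hε
  rw [hstar.star_eq_self he, he] at hεe
  exact ⟨e, by rw [he, he], ε, hεe, by rwa [hεr]⟩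

theorem rightNonDeg_of_rightSEps {star : S → S} (hstar : IsInverseStar star)
    (hsys : IsSystem 𝓡) (hre : RightSEps star 𝓡) : RightNonDeg 𝓡 := by
  intro e he r hr hr0
  obtain ⟨ε, hε, hεr⟩ := hre e r hr
  have hεe := hsys.sumProd_le (star e) e hε
  rw [hstar.star_eq_self he, he] at hεe
  exact ⟨e, by rw [he, he], ε, hεe, by rwa [hεr]⟩

theorem IsSystem.exists_isHomogeneousSum (hsys : IsSystem 𝓡) (a : R) :
    ∃ n, IsHomogeneousSum 𝓡 n a := by
  have ha : a ∈ ⨆ s, 𝓡 s := hsys.1 ▸ AddSubgroup.mem_top a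
  refine AddSubgroup.iSup_induction (C := fun x => ∃ n, IsHomogeneousSum 𝓡 n x) 𝓡 ha
    (fun s x hx => ?_) ?_ fun x y ⟨m, hx⟩ ⟨n, hy⟩ => ?_
  · exact ⟨1, fun _ => s, fun _ => x, fun _ => hx, Fin.sum_univ_one _⟩
  · exact ⟨0, Fin.elim0, Fin.elim0, Fin.rec0, Fin.sum_univ_zero _⟩
  · exact ⟨m + n, hx.add hy⟩

theorem IsSystem.exists_minimal_isHomogeneousSum (hsys : IsSystem 𝓡) {I : AddSubgroup R}
    (hI : I ≠ ⊥) : ∃ n, ∃ a ∈ I, a ≠ 0 ∧ IsHomogeneousSum 𝓡 (n + 1) a ∧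
      ∀ x ∈ I, IsHomogeneousSum 𝓡 n x → x = 0 := by
  classical
  have hP : ∃ m, ∃ a ∈ I, a ≠ 0 ∧ IsHomogeneousSum 𝓡 m a := by
    obtain ⟨a, haI, ha0⟩ := (AddSubgroup.bot_or_exists_ne_zero I).resolve_left hI
    exact ⟨_, a, haI, ha0, (hsys.exists_isHomogeneousSum a).choose_spec⟩
  obtain ⟨a, haI, ha0, ha⟩ := Nat.find_spec hP
  obtain ⟨n, hn⟩ : ∃ n, Nat.find hP = n + 1 :=
    Nat.exists_eq_succ_of_ne_zero fun h => ha0 (h ▸ ha).eq_zero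
  rw [hn] at ha
  refine ⟨n, a, haI, ha0, ha, fun x hxI hx => by_contra fun hx0 => ?_⟩
  exact Nat.find_min hP (by omega) ⟨x, hxI, hx0, hx⟩

section Minimal

variable {star : S → S} {I : AddSubgroup R} {n : ℕ}

theorem mem_centCenterZero_of_minimal (hidem : IdemCoherent 𝓡) (hI : IsRingIdeal I)
    (hmin : ∀ x ∈ I, IsHomogeneousSum 𝓡 n x → x = 0) {b y : R} {e : S}
    (he : IsIdempotentElem e) (hb : b ∈ I) (hy : y ∈ 𝓡 e)
    (hby : IsHomogeneousSum 𝓡 n (b - y)) : b ∈ centCenterZero 𝓡 := by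
  rintro z ⟨hz, hzc⟩
  let φ : R →+ R := AddMonoidHom.mulRight z - AddMonoidHom.mulLeft z
  have hφ : ∀ t, ∀ x ∈ 𝓡 t, φ x ∈ 𝓡 t := fun t x hx =>
    sub_mem ((hidem t).2 z hz x hx) ((hidem t).1 z hz x hx)
  have hφy : φ y = 0 := sub_eq_zero.mpr (hzc y (le_sysZero he hy)).symm
  have hφb := hby.map φ id hφ
  rw [map_sub, hφy, sub_zero] at hφb
  exact sub_eq_zero.mp (hmin _ (sub_mem (hI z b hb).2 (hI z b hb).1) hφb)

/-- Unless `R_{s*}` annihilates `a` (then so does `ε`, and `a = (a - r) - ε (a - r)` is a shorter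
sum), some `v ∈ R_{s*}` moves the head `r ∈ R_s` of `a` into `R_{s* s} ⊆ R₀`. -/
theorem exists_idempotent_head_of_leftSEps (hstar : IsInverseStar star) (hsys : IsSystem 𝓡)
    (hidem : IdemCoherent 𝓡) (hle : LeftSEps star 𝓡) (hI : IsRingIdeal I)
    (hmin : ∀ x ∈ I, IsHomogeneousSum 𝓡 n x → x = 0) {a : R} (haI : a ∈ I) (ha0 : a ≠ 0)
    (ha : IsHomogeneousSum 𝓡 (n + 1) a) :
    ∃ b ∈ I, b ≠ 0 ∧ ∃ e, IsIdempotentElem e ∧ ∃ y ∈ 𝓡 e, IsHomogeneousSum 𝓡 n (b - y) := by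
  obtain ⟨s, r, hr, hrest⟩ := ha.exists_head
  obtain ⟨ε, hε, hεr⟩ := hle s r hr
  obtain ⟨v, hv, hva⟩ : ∃ v ∈ 𝓡 (star s), v * a ≠ 0 := by
    by_contra! hann
    have hεa : ε * a = 0 := sumProd_mul_eq_zero hann hε
    have hε₀ : ε ∈ sysZero 𝓡 :=
      le_sysZero (hstar.isIdempotentElem_mul_star s) (hsys.sumProd_le _ _ hε)
    let φ : R →+ R := AddMonoidHom.id R - AddMonoidHom.mulLeft ε
    have hφ : ∀ t, ∀ x ∈ 𝓡 t, φ x ∈ 𝓡 t := fun t x hx => sub_mem hx ((hidem t).1 ε hε₀ x hx)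
    have hφa : φ (a - r) = a := by
      simp only [φ, AddMonoidHom.sub_apply, AddMonoidHom.id_apply, AddMonoidHom.coe_mulLeft,
        mul_sub, hεr, hεa]
      abel
    exact ha0 (hmin a haI (hφa ▸ hrest.map φ id hφ))
  refine ⟨v * a, (hI v a haI).1, hva, star s * s, hstar.isIdempotentElem_star_mul s, v * r,
    hsys.2 _ _ _ hv _ hr, ?_⟩
  rw [← mul_sub]
  exact hrest.map (AddMonoidHom.mulLeft v) (star s * ·) fun t x hx => hsys.2 _ _ _ hv _ hx

theorem exists_idempotent_head_of_rightSEps (hstar : IsInverseStar star) (hsys : IsSystem 𝓡)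
    (hidem : IdemCoherent 𝓡) (hre : RightSEps star 𝓡) (hI : IsRingIdeal I)
    (hmin : ∀ x ∈ I, IsHomogeneousSum 𝓡 n x → x = 0) {a : R} (haI : a ∈ I) (ha0 : a ≠ 0)
    (ha : IsHomogeneousSum 𝓡 (n + 1) a) :
    ∃ b ∈ I, b ≠ 0 ∧ ∃ e, IsIdempotentElem e ∧ ∃ y ∈ 𝓡 e, IsHomogeneousSum 𝓡 n (b - y) := by
  obtain ⟨s, r, hr, hrest⟩ := ha.exists_head
  obtain ⟨ε, hε, hεr⟩ := hre s r hr
  obtain ⟨v, hv, hva⟩ : ∃ v ∈ 𝓡 (star s), a * v ≠ 0 := by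
    by_contra! hann
    have hεa : a * ε = 0 := mul_sumProd_eq_zero hann hε
    have hε₀ : ε ∈ sysZero 𝓡 :=
      le_sysZero (hstar.isIdempotentElem_star_mul s) (hsys.sumProd_le _ _ hε)
    let φ : R →+ R := AddMonoidHom.id R - AddMonoidHom.mulRight ε
    have hφ : ∀ t, ∀ x ∈ 𝓡 t, φ x ∈ 𝓡 t := fun t x hx => sub_mem hx ((hidem t).2 ε hε₀ x hx)
    have hφa : φ (a - r) = a := by
      simp only [φ, AddMonoidHom.sub_apply, AddMonoidHom.id_apply, AddMonoidHom.coe_mulRight,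
        sub_mul, hεr, hεa]
      abel
    exact ha0 (hmin a haI (hφa ▸ hrest.map φ id hφ))
  refine ⟨a * v, (hI v a haI).2, hva, s * star s, hstar.isIdempotentElem_mul_star s, r * v,
    hsys.2 _ _ _ hr _ hv, ?_⟩
  rw [← sub_mul]
  exact hrest.map (AddMonoidHom.mulRight v) (· * star s) fun t x hx => hsys.2 _ _ _ hx _ hv

theorem iipCentCenterZero (hstar : IsInverseStar star) (hsys : IsSystem 𝓡)
    (hcoh : Coherent star 𝓡) (hse : LeftSEps star 𝓡 ∨ RightSEps star 𝓡) :
    IIPCentCenterZero 𝓡 := by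
  intro I hI hI0
  have hidem := hcoh.idemCoherent hstar hsys
  obtain ⟨n, a, haI, ha0, ha, hmin⟩ := hsys.exists_minimal_isHomogeneousSum hI0
  obtain ⟨b, hbI, hb0, e, he, y, hy, hby⟩ := hse.elim
    (fun hle => exists_idempotent_head_of_leftSEps hstar hsys hidem hle hI hmin haI ha0 ha)
    (fun hre => exists_idempotent_head_of_rightSEps hstar hsys hidem hre hI hmin haI ha0 ha)
  exact ⟨b, hb0, hbI, mem_centCenterZero_of_minimal hidem hI hmin he hbI hy hby⟩

end Minimal

/-- If `S` is an inverse semigroup and `R` is a coherent,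
left (respectively right) s-unital epsilon-strong system over `S`, then `R` is left
(respectively right) non-degenerate, and the ring extension `R / C_R(Z(R₀))` has the
ideal intersection property. -/
theorem stmt4 {S R : Type*} [Semigroup S] [NonUnitalRing R]
    (star : S → S) (hstar : IsInverseStar star)
    (𝓡 : S → AddSubgroup R) (hsys : IsSystem 𝓡)
    (hcoh : Coherent star 𝓡) :
    (LeftSEps star 𝓡 → LeftNonDeg 𝓡 ∧ IIPCentCenterZero 𝓡) ∧
    (RightSEps star 𝓡 → RightNonDeg 𝓡 ∧ IIPCentCenterZero 𝓡) :=
  ⟨fun hle => ⟨leftNonDeg_of_leftSEps hstar hsys hle, iipCentCenterZero hstar hsys hcoh (.inl hle)⟩,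
    fun hre =>
      ⟨rightNonDeg_of_rightSEps hstar hsys hre, iipCentCenterZero hstar hsys hcoh (.inr hre)⟩⟩

end PaperSys
end

section
/- Let S be an inverse semigroup and let R be a system over S. Then R is left unital epsilon-strong (i.e. for every s ∈ S there exists ε_s ∈ R_s R_{s*} with ε_s r = r for all r ∈ R_s) if and only if R is symmetric and for every s ∈ S the ring R_s R_{s*} is left unital. Analogously, R is right unital epsilon-strong (i.e. for every s ∈ S there exists ε'_s ∈ R_{s*} R_s with r ε'_s = r for all r ∈ R_s) if and only if R is symmetric and for every s ∈ S the ring R_{s*} R_s is right unital. -/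
open Pointwise

namespace PaperSys

variable {S R : Type*} [Semigroup S] [NonUnitalRing R]

/-! Because `s s* s = s`, the product `R_s R_{s*} R_s` always lies in `R_s`. A left identity
`ε ∈ R_s R_{s*}` for `R_s` gives the reverse inclusion (`r = ε r`), and it is a left identity of
`R_s R_{s*}` because `ε (x y) = (ε x) y`. Conversely, a left identity of `R_s R_{s*}` fixes
`R_s R_{s*} R_s`, which is `R_s` by symmetry. The right-handed case is the mirror image, using
associativity of the product of additive subgroups. -/

section SumProd

variable {R : Type*} [NonUnitalRing R] {A B C : AddSubgroup R}

lemma mul_mem_sumProd {x y : R} (hx : x ∈ A) (hy : y ∈ B) : x * y ∈ sumProd A B :=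
  AddSubgroup.subset_closure (Set.mul_mem_mul hx hy)

lemma sumProd_le (h : ∀ x ∈ A, ∀ y ∈ B, x * y ∈ C) : sumProd A B ≤ C :=
  (AddSubgroup.closure_le C).mpr (Set.mul_subset_iff.mpr h)

lemma sumProd_assoc : sumProd (sumProd A B) C = sumProd A (sumProd B C) := by
  apply le_antisymm
  · refine sumProd_le fun m hm c hc => ?_
    suffices sumProd A B ≤ (sumProd A (sumProd B C)).comap (AddMonoidHom.mulRight c) from this hm
    exact sumProd_le fun a ha b hb => by
      simpa only [AddSubgroup.mem_comap, AddMonoidHom.coe_mulRight, mul_assoc]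
        using mul_mem_sumProd ha (mul_mem_sumProd hb hc)
  · refine sumProd_le fun a ha m hm => ?_
    suffices sumProd B C ≤ (sumProd (sumProd A B) C).comap (AddMonoidHom.mulLeft a) from this hm
    exact sumProd_le fun b hb c hc => by
      simpa only [AddSubgroup.mem_comap, AddMonoidHom.coe_mulLeft, ← mul_assoc]
        using mul_mem_sumProd (mul_mem_sumProd ha hb) hc

lemma mul_eq_self_of_mem_sumProd {ε : R} (h : ∀ a ∈ A, ε * a = a) :
    ∀ r ∈ sumProd A B, ε * r = r :=
  fun _ hr => AddMonoidHom.eqOn_closure (f := AddMonoidHom.mulLeft ε) (g := AddMonoidHom.id R)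
    (by rintro _ ⟨a, ha, b, -, rfl⟩
        exact (mul_assoc ε a b).symm.trans (congrArg (· * b) (h a ha))) hr

lemma self_mul_eq_of_mem_sumProd {ε : R} (h : ∀ b ∈ B, b * ε = b) :
    ∀ r ∈ sumProd A B, r * ε = r :=
  fun _ hr => AddMonoidHom.eqOn_closure (f := AddMonoidHom.mulRight ε) (g := AddMonoidHom.id R)
    (by rintro _ ⟨a, -, b, hb, rfl⟩
        exact (mul_assoc a b ε).trans (congrArg (a * ·) (h b hb))) hr

lemma le_sumProd_of_mul_eq_self {ε : R} (hε : ε ∈ A) (h : ∀ r ∈ B, ε * r = r) :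
    B ≤ sumProd A B :=
  fun r hr => h r hr ▸ mul_mem_sumProd hε hr

lemma le_sumProd_of_self_mul_eq {ε : R} (hε : ε ∈ B) (h : ∀ r ∈ A, r * ε = r) :
    A ≤ sumProd A B :=
  fun r hr => h r hr ▸ mul_mem_sumProd hr hε

end SumProd

section System

variable {S R : Type*} [Semigroup S] [NonUnitalRing R] {star : S → S}
  {𝓡 : S → AddSubgroup R}

lemma sumProd_sumProd_le_of_mul_mul_eq
    (hmul : ∀ s t : S, ∀ x ∈ 𝓡 s, ∀ y ∈ 𝓡 t, x * y ∈ 𝓡 (s * t)) {s t : S}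
    (hst : s * t * s = s) :
    sumProd (sumProd (𝓡 s) (𝓡 t)) (𝓡 s) ≤ 𝓡 s := by
  have hpair : sumProd (𝓡 s) (𝓡 t) ≤ 𝓡 (s * t) := sumProd_le (hmul s t)
  refine sumProd_le fun m hm x hx => ?_
  simpa only [hst] using hmul _ s m (hpair hm) x hx

variable (hinv : ∀ s : S, s * star s * s = s)
  (hmul : ∀ s t : S, ∀ x ∈ 𝓡 s, ∀ y ∈ 𝓡 t, x * y ∈ 𝓡 (s * t))
include hinv hmul

lemma leftUnitalEps_iff :
    (∀ s : S, ∃ ε ∈ sumProd (𝓡 s) (𝓡 (star s)), ∀ r ∈ 𝓡 s, ε * r = r) ↔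
      IsSymmetricSys star 𝓡 ∧
        ∀ s : S, ∃ e ∈ sumProd (𝓡 s) (𝓡 (star s)),
          ∀ a ∈ sumProd (𝓡 s) (𝓡 (star s)), e * a = a := by
  refine ⟨fun h => ⟨fun s => ?_, fun s => ?_⟩, fun ⟨hsym, hunital⟩ s => ?_⟩
  · obtain ⟨ε, hε, hεr⟩ := h s
    exact le_antisymm (sumProd_sumProd_le_of_mul_mul_eq hmul (hinv s))
      (le_sumProd_of_mul_eq_self hε hεr)
  · obtain ⟨ε, hε, hεr⟩ := h s
    exact ⟨ε, hε, mul_eq_self_of_mem_sumProd hεr⟩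
  · obtain ⟨e, he, hea⟩ := hunital s
    exact ⟨e, he, fun r hr => mul_eq_self_of_mem_sumProd hea r ((hsym s).ge hr)⟩

lemma rightUnitalEps_iff :
    (∀ s : S, ∃ ε' ∈ sumProd (𝓡 (star s)) (𝓡 s), ∀ r ∈ 𝓡 s, r * ε' = r) ↔
      IsSymmetricSys star 𝓡 ∧
        ∀ s : S, ∃ f ∈ sumProd (𝓡 (star s)) (𝓡 s),
          ∀ a ∈ sumProd (𝓡 (star s)) (𝓡 s), a * f = a := by
  refine ⟨fun h => ⟨fun s => ?_, fun s => ?_⟩, fun ⟨hsym, hunital⟩ s => ?_⟩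
  · obtain ⟨ε, hε, hεr⟩ := h s
    have hle := sumProd_sumProd_le_of_mul_mul_eq hmul (hinv s)
    rw [sumProd_assoc] at hle ⊢
    exact le_antisymm hle (le_sumProd_of_self_mul_eq hε hεr)
  · obtain ⟨ε, hε, hεr⟩ := h s
    exact ⟨ε, hε, self_mul_eq_of_mem_sumProd hεr⟩
  · obtain ⟨f, hf, haf⟩ := hunital s
    refine ⟨f, hf, fun r hr => ?_⟩
    have hr' : r ∈ sumProd (𝓡 s) (sumProd (𝓡 (star s)) (𝓡 s)) := by
      rwa [← sumProd_assoc, hsym s]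
    exact self_mul_eq_of_mem_sumProd haf r hr'

end System

/-- Let `S` be an inverse semigroup and `R` a system over `S`.
Then `R` is left unital epsilon-strong iff `R` is symmetric and for every `s`
the ring `R_s R_{s*}` is left unital; and `R` is right unital epsilon-strong
iff `R` is symmetric and for every `s` the ring `R_{s*} R_s` is right unital. -/
theorem stmt6 {S R : Type*} [Semigroup S] [NonUnitalRing R]
    (star : S → S) (hstar : IsInverseStar star)
    (𝓡 : S → AddSubgroup R) (hsys : IsSystem 𝓡) :
    ((∀ s : S, ∃ ε ∈ sumProd (𝓡 s) (𝓡 (star s)), ∀ r ∈ 𝓡 s, ε * r = r) ↔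
      IsSymmetricSys star 𝓡 ∧
        ∀ s : S, ∃ e ∈ sumProd (𝓡 s) (𝓡 (star s)),
          ∀ a ∈ sumProd (𝓡 s) (𝓡 (star s)), e * a = a) ∧
    ((∀ s : S, ∃ ε' ∈ sumProd (𝓡 (star s)) (𝓡 s), ∀ r ∈ 𝓡 s, r * ε' = r) ↔
      IsSymmetricSys star 𝓡 ∧
        ∀ s : S, ∃ f ∈ sumProd (𝓡 (star s)) (𝓡 s),
          ∀ a ∈ sumProd (𝓡 (star s)) (𝓡 s), a * f = a) :=
  ⟨leftUnitalEps_iff hstar.1 hsys.2, rightUnitalEps_iff hstar.1 hsys.2⟩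

end PaperSys
end
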